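/- arXiv:1605.00174 — 2 statements merged into one kernel-verified Lean document; each statement's English description precedes it below -/
import Mathlib

section
/- For every subspace V of K⟨G⟩, with (G,<) a well-ordered set, there exists a unique reduction operator T relative to (G,<) with kernel V. Moreover, the set of generators not fixed by T equals the set of leading generators of the reduced basis of V. -/
/-- `T` is a reduction operator relative to `(G,<)`. -/
def IsRedOp {K G : Type*} [Field K] [LinearOrder G]
    (T : Module.End K (G →₀ K)) : Prop :=
  T ∘ₗ T = T ∧ ∀ g : G, T (Finsupp.single g 1) = Finsupp.single g 1 ∨
    ∀ g' ∈ (T (Finsupp.single g 1)).support, g' < g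

/-- `g` is the leading generator of `v`. -/
def IsLeadingGen {K G : Type*} [Field K] [LinearOrder G]
    (v : G →₀ K) (g : G) : Prop :=
  g ∈ v.support ∧ ∀ g' ∈ v.support, g' ≤ g

/-- `B` is a reduced basis of the subspace `V` of `K⟨G⟩`. -/
def IsReducedBasis {K G : Type*} [Field K] [LinearOrder G]
    (V : Submodule K (G →₀ K)) (B : Set (G →₀ K)) : Prop :=
  (B ⊆ (V : Set (G →₀ K))) ∧
  LinearIndependent K (fun e : B => (e : G →₀ K)) ∧
  Submodule.span K B = V ∧
  (∀ e ∈ B, ∃ g : G, IsLeadingGen e g ∧ e g = 1) ∧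
  (∀ e ∈ B, ∀ e' ∈ B, e ≠ e' → ∀ g : G, IsLeadingGen e' g → e g = 0)

/-
Let `L` be the set of leading generators of elements of `V`. The span `K⟨Lᶜ⟩` of the
other generators is a complement of `V`: the two meet trivially because the leading
generator of a nonzero vector of `V` lies in `L`, and by well-founded induction each
`g ∈ L` is congruent modulo `V` to a combination of smaller generators. A reduction
operator `T` with kernel `V` fixes exactly the generators outside `L`, and by well-founded
induction its range is spanned by the generators it fixes; being idempotent, `T` is the
projection onto `K⟨Lᶜ⟩` along `V`, and this projection is indeed a reduction operator.
For a reduced basis, the coefficient of a basis vector `e` in a linear combination is its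
value at the leading generator of `e`, so each element of `L` leads some basis vector.
-/

open Finsupp Set

theorem Finsupp.mem_of_forall_single_mem {R α : Type*} [Semiring R]
    {S : Submodule R (α →₀ R)} {x : α →₀ R} (h : ∀ a ∈ x.support, single a 1 ∈ S) :
    x ∈ S := by
  have hx := mem_supported_support R x
  rw [supported_eq_span_single] at hx
  exact Submodule.span_le.mpr (by rintro _ ⟨a, ha, rfl⟩; exact h a ha) hx

theorem Finsupp.apply_mem_of_forall_apply_single_mem {R α M : Type*} [Semiring R]
    [AddCommMonoid M] [Module R M] (f : (α →₀ R) →ₗ[R] M) {S : Submodule R M} {x : α →₀ R}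
    (h : ∀ a ∈ x.support, f (single a 1) ∈ S) : f x ∈ S :=
  mem_of_forall_single_mem (S := S.comap f) h

section

variable {K G : Type*} [Field K] [LinearOrder G]

theorem IsLeadingGen.unique {v : G →₀ K} {g g' : G} (h : IsLeadingGen v g)
    (h' : IsLeadingGen v g') : g = g' :=
  le_antisymm (h'.2 g h.1) (h.2 g' h'.1)

theorem exists_isLeadingGen {v : G →₀ K} (hv : v ≠ 0) : ∃ g, IsLeadingGen v g := by
  have hne : v.support.Nonempty := support_nonempty_iff.mpr hv
  exact ⟨v.support.max' hne, v.support.max'_mem hne, fun g' hg' => v.support.le_max' g' hg'⟩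

theorem isLeadingGen_single_sub {x : G →₀ K} {g : G} (hx : x ∈ supported K K (Iio g)) :
    IsLeadingGen (single g 1 - x) g := by
  have hxg : x g = 0 := (mem_supported' K x).mp hx g (lt_irrefl g)
  refine ⟨by simp [hxg], fun h hh => ?_⟩
  rcases Finset.mem_union.mp (support_sub hh) with hh | hh
  · exact (Finset.mem_singleton.mp (support_single_subset hh)).le
  · exact (hx hh).le

theorem IsLeadingGen.single_sub_inv_smul_mem_supported {v : G →₀ K} {g : G}
    (hv : IsLeadingGen v g) : single g 1 - (v g)⁻¹ • v ∈ supported K K (Iio g) := by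
  have hvg : v g ≠ 0 := mem_support_iff.mp hv.1
  rw [mem_supported']
  intro h hh
  rcases (not_lt.mp hh).eq_or_lt with rfl | hgh
  · simp [hvg]
  · have hvh : v h = 0 := notMem_support_iff.mp fun hh' => absurd (hv.2 h hh') (not_le.mpr hgh)
    simp [hvh, single_eq_of_ne hgh.ne']

variable (V : Submodule K (G →₀ K))

def leadingGens : Set G := {g | ∃ v ∈ V, IsLeadingGen v g}

variable {V}

theorem apply_eq_zero_of_mem_supported_compl_leadingGens {w : G →₀ K}
    (hw : w ∈ supported K K (leadingGens V)ᶜ) {g : G} (hg : g ∈ leadingGens V) : w g = 0 :=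
  (mem_supported' K w).mp hw g (not_not.mpr hg)

variable (V)

theorem disjoint_supported_compl_leadingGens :
    Disjoint (supported K K (leadingGens V)ᶜ) V := by
  rw [Submodule.disjoint_def]
  intro v hvW hvV
  by_contra hv
  obtain ⟨g, hg⟩ := exists_isLeadingGen hv
  exact mem_support_iff.mp hg.1
    (apply_eq_zero_of_mem_supported_compl_leadingGens hvW ⟨v, hvV, hg⟩)

theorem single_mem_supported_compl_leadingGens_sup [WellFoundedLT G] (g : G) :
    single g 1 ∈ supported K K (leadingGens V)ᶜ ⊔ V := by
  induction g using WellFoundedLT.induction with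
  | ind g ih =>
    by_cases hg : g ∈ leadingGens V
    · obtain ⟨v, hvV, hv⟩ := hg
      have hlower : single g 1 - (v g)⁻¹ • v ∈ supported K K (leadingGens V)ᶜ ⊔ V :=
        mem_of_forall_single_mem fun h hh =>
          ih h (hv.single_sub_inv_smul_mem_supported hh)
      rw [← sub_add_cancel (single g 1) ((v g)⁻¹ • v)]
      exact Submodule.add_mem _ hlower (Submodule.mem_sup_right (V.smul_mem _ hvV))
    · exact Submodule.mem_sup_left (single_mem_supported K 1 hg)

theorem isCompl_supported_compl_leadingGens [WellFoundedLT G] :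
    IsCompl (supported K K (leadingGens V)ᶜ) V :=
  ⟨disjoint_supported_compl_leadingGens V, codisjoint_iff.mpr <| eq_top_iff.mpr fun _ _ =>
    mem_of_forall_single_mem fun g _ => single_mem_supported_compl_leadingGens_sup V g⟩

variable {V}

theorem single_sub_mem_supported_Iic {g : G} {w : G →₀ K}
    (hw : w ∈ supported K K (leadingGens V)ᶜ) (hV : single g 1 - w ∈ V) :
    single g 1 - w ∈ supported K K (Iic g) := by
  intro h hh
  have hne : single g 1 - w ≠ 0 := support_nonempty_iff.mp ⟨h, hh⟩
  obtain ⟨m, hm⟩ := exists_isLeadingGen hne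
  have hwm : w m = 0 := apply_eq_zero_of_mem_supported_compl_leadingGens hw ⟨_, hV, hm⟩
  have hmg : m = g := by
    by_contra hmg
    exact mem_support_iff.mp hm.1 (by simp [hwm, single_eq_of_ne hmg])
  exact hmg ▸ hm.2 h hh

variable (V)

noncomputable def redOpWithKer [WellFoundedLT G] : Module.End K (G →₀ K) :=
  (supported K K (leadingGens V)ᶜ).projection V (isCompl_supported_compl_leadingGens V)

theorem ker_redOpWithKer [WellFoundedLT G] : LinearMap.ker (redOpWithKer V) = V :=
  Submodule.ker_projection _

theorem isRedOp_redOpWithKer [WellFoundedLT G] : IsRedOp (redOpWithKer V) := by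
  refine ⟨Submodule.isIdempotentElem_projection _, fun g => ?_⟩
  by_cases hg : g ∈ leadingGens V
  · right
    have hc := isCompl_supported_compl_leadingGens V
    set y := redOpWithKer V (single g 1)
    have hy : y ∈ supported K K (leadingGens V)ᶜ := Submodule.projection_apply_mem hc _
    have hyV : single g 1 - y ∈ V := Submodule.sub_projection_mem hc _
    have hyg : y g = 0 := apply_eq_zero_of_mem_supported_compl_leadingGens hy hg
    have hyIic : y ∈ supported K K (Iic g) := by
      rw [← sub_sub_cancel (single g 1) y]
      exact Submodule.sub_mem _ (single_mem_supported K 1 (le_refl g))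
        (single_sub_mem_supported_Iic hy hyV)
    intro h hh
    refine lt_of_le_of_ne (hyIic hh) ?_
    rintro rfl
    exact mem_support_iff.mp hh hyg
  · exact Or.inl (Submodule.projection_apply_of_mem_left _ (single_mem_supported K 1 hg))

variable {V} {T : Module.End K (G →₀ K)}

theorem IsRedOp.apply_apply (hT : IsRedOp T) (x : G →₀ K) : T (T x) = T x :=
  LinearMap.congr_fun hT.1 x

theorem IsRedOp.apply_mem_supported_Iio (hT : IsRedOp T) {g : G} {x : G →₀ K}
    (hx : x ∈ supported K K (Iio g)) : T x ∈ supported K K (Iio g) :=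
  apply_mem_of_forall_apply_single_mem T fun h hh => by
    rcases hT.2 h with hfix | hlt
    · rw [hfix]
      exact single_mem_supported K (1 : K) (hx hh)
    · exact fun h' hh' => (hlt h' hh').trans (hx hh)

theorem IsRedOp.mem_leadingGens_iff (hT : IsRedOp T) (hker : LinearMap.ker T = V) {g : G} :
    g ∈ leadingGens V ↔ T (single g 1) ≠ single g 1 := by
  constructor
  · rintro ⟨v, hvV, hv⟩ hfix
    have hTv : T v = 0 := by rwa [← LinearMap.mem_ker, hker]
    have hlower := hT.apply_mem_supported_Iio hv.single_sub_inv_smul_mem_supported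
    rw [map_sub, map_smul, hTv, smul_zero, sub_zero, hfix] at hlower
    exact lt_irrefl g (hlower (by simp))
  · intro hnfix
    refine ⟨single g 1 - T (single g 1), ?_, isLeadingGen_single_sub ?_⟩
    · rw [← hker, LinearMap.mem_ker, map_sub, hT.apply_apply, sub_self]
    · exact fun h hh => (hT.2 g).resolve_left hnfix h hh

theorem IsRedOp.range_eq [WellFoundedLT G] (hT : IsRedOp T) :
    LinearMap.range T = supported K K {g | T (single g 1) = single g 1} := by
  have hsingle : ∀ g : G, T (single g 1) ∈ supported K K {g | T (single g 1) = single g 1} := by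
    intro g
    induction g using WellFoundedLT.induction with
    | ind g ih =>
      rcases hT.2 g with hfix | hlt
      · rw [hfix]
        exact single_mem_supported K (1 : K) hfix
      · rw [← hT.apply_apply]
        exact apply_mem_of_forall_apply_single_mem T fun h hh => ih h (hlt h hh)
  refine le_antisymm ?_ ?_
  · rintro _ ⟨x, rfl⟩
    exact apply_mem_of_forall_apply_single_mem T fun g _ => hsingle g
  · rw [supported_eq_span_single, Submodule.span_le]
    rintro _ ⟨g, hg, rfl⟩
    exact ⟨single g 1, hg⟩

theorem IsRedOp.range_eq_supported_compl_leadingGens [WellFoundedLT G] (hT : IsRedOp T)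
    (hker : LinearMap.ker T = V) :
    LinearMap.range T = supported K K (leadingGens V)ᶜ := by
  rw [hT.range_eq]
  congr 1
  ext g
  simp [hT.mem_leadingGens_iff hker]

theorem IsRedOp.eq_redOpWithKer [WellFoundedLT G] (hT : IsRedOp T)
    (hker : LinearMap.ker T = V) : T = redOpWithKer V :=
  (LinearMap.IsIdempotentElem.ext_iff hT.1 (isRedOp_redOpWithKer V).1).mpr
    ⟨by rw [hT.range_eq_supported_compl_leadingGens hker, redOpWithKer,
        Submodule.range_projection],
      by rw [hker, ker_redOpWithKer]⟩

theorem IsReducedBasis.sum_apply_of_isLeadingGen {B : Set (G →₀ K)} (hB : IsReducedBasis V B)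
    {c : (G →₀ K) →₀ K} (hc : ↑c.support ⊆ B) {e : G →₀ K} (he : e ∈ B) {g : G}
    (hg : IsLeadingGen e g) : (c.sum fun e r => r • e) g = c e := by
  obtain ⟨-, -, -, hlead, hnonint⟩ := hB
  obtain ⟨g', hg', heg'⟩ := hlead e he
  rw [Finsupp.sum_apply, Finsupp.sum, Finset.sum_eq_single e]
  · rw [Finsupp.smul_apply, smul_eq_mul, hg.unique hg', heg', mul_one]
  · intro e' he' hne
    rw [Finsupp.smul_apply, hnonint e' (hc he') e he hne g hg, smul_zero]
  · intro he
    rw [notMem_support_iff.mp he, zero_smul, Finsupp.zero_apply]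

theorem IsReducedBasis.leadingGens_eq {B : Set (G →₀ K)} (hB : IsReducedBasis V B) :
    leadingGens V = {g | ∃ e ∈ B, IsLeadingGen e g} := by
  refine Set.Subset.antisymm ?_ fun g ⟨e, he, hg⟩ => ⟨e, hB.1 he, hg⟩
  rintro g ⟨v, hvV, hv⟩
  obtain ⟨c, hc, rfl⟩ := Submodule.mem_span_set.mp (hB.2.2.1 ▸ hvV)
  have hvg := mem_support_iff.mp hv.1
  rw [Finsupp.sum_apply, Finsupp.sum] at hvg
  obtain ⟨e, hce, hceg⟩ := Finset.exists_ne_zero_of_sum_ne_zero hvg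
  obtain ⟨ge, hge, -⟩ := hB.2.2.2.1 e (hc hce)
  have hle : g ≤ ge := hge.2 g (mem_support_iff.mpr (right_ne_zero_of_smul hceg))
  have hge_le : ge ≤ g := hv.2 ge <| mem_support_iff.mpr <| by
    rw [hB.sum_apply_of_isLeadingGen hc (hc hce) hge]
    exact mem_support_iff.mp hce
  exact ⟨e, hc hce, le_antisymm hle hge_le ▸ hge⟩

end

/-- For every subspace `V` of `K⟨G⟩` there is a unique reduction operator with
kernel `V`; moreover its set of non-reduced generators is the set of leading
generators of any reduced basis of `V`. -/
theorem exists_unique_redOp_ker {K G : Type*} [Field K] [LinearOrder G]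
    [WellFoundedLT G] (V : Submodule K (G →₀ K)) :
    (∃! T : Module.End K (G →₀ K), IsRedOp T ∧ LinearMap.ker T = V) ∧
    (∀ T : Module.End K (G →₀ K), IsRedOp T → LinearMap.ker T = V →
      ∀ B : Set (G →₀ K), IsReducedBasis V B →
        {g : G | T (Finsupp.single g 1) ≠ Finsupp.single g 1} =
          {g : G | ∃ e ∈ B, IsLeadingGen e g}) := by
  refine ⟨⟨redOpWithKer V, ⟨isRedOp_redOpWithKer V, ker_redOpWithKer V⟩,
    fun T ⟨hT, hker⟩ => hT.eq_redOpWithKer hker⟩, ?_⟩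
  intro T hT hker B hB
  rw [← hB.leadingGens_eq]
  ext g
  exact (hT.mem_leadingGens_iff hker).symm
end

section
/- A set F of reduction operators relative to a well-ordered set (G,<) is confluent if and only if every element of K⟨G⟩ admits a unique F-normal form. -/
open Finsupp Submodule

section Monoid

variable {K M : Type*} [Semiring K] [AddCommMonoid M] [Module K M]
  {F : Set (Module.End K M)} {R : Module.End K M}

theorem Module.End.apply_eq_self_of_mem_closure {x : M} (hF : ∀ T ∈ F, T x = x)
    (hR : R ∈ Submonoid.closure F) : R x = x :=
  Submonoid.closure_le (S := MulAction.stabilizerSubmonoid (Module.End K M) x) |>.2 hF hR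

theorem Module.End.le_comap_of_mem_closure {p : Submodule K M} (hF : ∀ T ∈ F, p ≤ p.comap T)
    (hR : R ∈ Submonoid.closure F) : p ≤ p.comap R := by
  induction hR using Submonoid.closure_induction with
  | mem T hT => exact hF T hT
  | one => exact fun x hx => hx
  | mul R S _ _ ihR ihS => exact fun x hx => ihR (ihS hx)

theorem Module.End.exists_mem_closure_apply_eq_zero {S : Submodule K M}
    (hS : ∀ v, ∃! u, u ∈ S ∧ ∃ R ∈ Submonoid.closure F, R v = u) {x : M}
    (hx : x ∈ ⨆ T ∈ F, LinearMap.ker T) : ∃ R ∈ Submonoid.closure F, R x = 0 := by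
  rw [iSup_subtype'] at hx
  induction hx using Submodule.iSup_induction' with
  | mem T x hx => exact ⟨T, Submonoid.subset_closure T.2, hx⟩
  | zero => exact ⟨1, one_mem _, rfl⟩
  | add x y _ _ ihx ihy =>
    obtain ⟨R₁, hR₁, hx⟩ := ihx
    obtain ⟨u, ⟨hmem, R₂, hR₂, rfl⟩, -⟩ := hS (R₁ y)
    -- a normal form of `R₁ y` is one of `y`, whose normal form is `0`
    have hu : R₂ (R₁ y) = 0 := by
      obtain ⟨R, hR, hy⟩ := ihy
      exact (hS y).unique ⟨hmem, R₂ * R₁, mul_mem hR₂ hR₁, rfl⟩ ⟨zero_mem _, R, hR, hy⟩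
    exact ⟨R₂ * R₁, mul_mem hR₂ hR₁, by simp [hx, hu]⟩

end Monoid

theorem Module.End.sub_apply_mem_iSup_ker {K M : Type*} [Ring K] [AddCommGroup M] [Module K M]
    {F : Set (Module.End K M)} (hF : ∀ T ∈ F, IsIdempotentElem T) {R : Module.End K M}
    (hR : R ∈ Submonoid.closure F) (x : M) : x - R x ∈ ⨆ T ∈ F, LinearMap.ker T := by
  induction hR using Submonoid.closure_induction generalizing x with
  | mem T hT =>
    refine mem_iSup_of_mem T (mem_iSup_of_mem hT ?_)
    rw [LinearMap.mem_ker, map_sub, sub_eq_zero]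
    exact (LinearMap.congr_fun (hF T hT) x).symm
  | one => simp
  | mul R S _ _ ihR ihS =>
    simpa only [sub_add_sub_cancel, Module.End.mul_apply] using add_mem (ihS x) (ihR (S x))

section Finsupp

variable {K α : Type*} [Semiring K]

theorem Finsupp.supported_le_comap_of_single {T : (α →₀ K) →ₗ[K] (α →₀ K)} {s t : Set α}
    (h : ∀ a ∈ s, T (single a 1) ∈ supported K K t) :
    supported K K s ≤ (supported K K t).comap T := by
  rw [supported_eq_span_single, span_le]
  rintro _ ⟨a, ha, rfl⟩
  exact h a ha

theorem Finsupp.apply_eq_self_of_mem_supported {T : Module.End K (α →₀ K)} {s : Set α}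
    (h : s ⊆ {a | T (single a 1) = single a 1}) {v : α →₀ K} (hv : v ∈ supported K K s) :
    T v = v :=
  LinearMap.eqOn_span' (g := LinearMap.id) (by rintro _ ⟨a, ha, rfl⟩; exact h ha)
    (supported_eq_span_single K s ▸ hv)

/-- The paper's `Red(F)`. -/
def reducedGenerators (F : Set (Module.End K (α →₀ K))) : Set α :=
  {a | ∀ T ∈ F, T (single a 1) = single a 1}

end Finsupp

namespace IsRedOp

variable {K G : Type*} [Field K] [LinearOrder G] {T : Module.End K (G →₀ K)}

theorem isIdempotentElem (hT : IsRedOp T) : IsIdempotentElem T := hT.1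

theorem apply_single_mem_supported_Iio (hT : IsRedOp T) {g : G}
    (hg : T (single g 1) ≠ single g 1) : T (single g 1) ∈ supported K K (Set.Iio g) :=
  (hT.2 g).resolve_left hg

theorem apply_single_mem_supported_Iic (hT : IsRedOp T) (g : G) :
    T (single g 1) ∈ supported K K (Set.Iic g) := by
  by_cases hg : T (single g 1) = single g 1
  · rw [hg]
    exact single_mem_supported K 1 le_rfl
  · exact supported_mono Set.Iio_subset_Iic_self (hT.apply_single_mem_supported_Iio hg)

theorem supported_le_comap (hT : IsRedOp T) {s : Set G} (hs : IsLowerSet s) :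
    supported K K s ≤ (supported K K s).comap T :=
  supported_le_comap_of_single fun g hg =>
    supported_mono (fun _ h => hs h hg) (hT.apply_single_mem_supported_Iic g)

theorem apply_mem_supported_union_Iio (hT : IsRedOp T) {N : Set G}
    (hN : N ⊆ {g | T (single g 1) = single g 1}) {h : G} (hh : T (single h 1) ≠ single h 1)
    {v : G →₀ K} (hv : v ∈ supported K K (N ∪ Set.Iic h)) :
    T v ∈ supported K K (N ∪ Set.Iio h) := by
  refine supported_le_comap_of_single (fun g hg => ?_) hv
  rcases hg with hg | hg
  · rw [hN hg]
    exact single_mem_supported K 1 (Or.inl hg)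
  · refine supported_mono Set.subset_union_right ?_
    rcases hg.lt_or_eq with hg | rfl
    · exact supported_mono (Set.Iic_subset_Iio.2 hg) (hT.apply_single_mem_supported_Iic g)
    · exact hT.apply_single_mem_supported_Iio hh

end IsRedOp

section NormalForm

variable {K G : Type*} [Field K] [LinearOrder G] {F : Set (Module.End K (G →₀ K))}

theorem exists_mem_closure_apply_mem_supported [WellFoundedLT G] (hF : ∀ T ∈ F, IsRedOp T)
    (v : G →₀ K) : ∃ R ∈ Submonoid.closure F, R v ∈ supported K K (reducedGenerators F) := by
  classical
  obtain ⟨m, hm⟩ : ∃ m, (v.support.filter (· ∉ reducedGenerators F)).max = m := ⟨_, rfl⟩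
  induction m using WellFoundedLT.induction generalizing v with
  | _ m ih =>
  cases m with
  | bot =>
    refine ⟨1, one_mem _, fun g hg => ?_⟩
    by_contra hgN
    rw [Finset.max_eq_bot, Finset.filter_eq_empty_iff] at hm
    exact hm hg hgN
  | coe h =>
    obtain ⟨-, hhN⟩ := Finset.mem_filter.1 (Finset.mem_of_max hm)
    obtain ⟨T, hTF, hTh⟩ : ∃ T ∈ F, T (single h 1) ≠ single h 1 := by
      simpa [reducedGenerators] using hhN
    have hv : v ∈ supported K K (reducedGenerators F ∪ Set.Iic h) := fun g hg =>
      or_iff_not_imp_left.2 fun hgN => Finset.le_max_of_eq (Finset.mem_filter.2 ⟨hg, hgN⟩) hm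
    have hTv := (hF T hTF).apply_mem_supported_union_Iio (N := reducedGenerators F)
      (fun _ hg => hg T hTF) hTh hv
    have hlt : ((T v).support.filter (· ∉ reducedGenerators F)).max < h := by
      refine (Finset.sup_lt_iff (WithBot.bot_lt_coe h)).2 fun g hg => ?_
      obtain ⟨hg, hgN⟩ := Finset.mem_filter.1 hg
      exact WithBot.coe_lt_coe.2 ((hTv hg).resolve_left hgN)
    obtain ⟨R, hR, hRTv⟩ := ih _ hlt (T v) rfl
    exact ⟨R * T, mul_mem hR (Submonoid.subset_closure hTF), hRTv⟩

theorem existsUnique_normalForm_of_confluent [WellFoundedLT G] (hF : ∀ T ∈ F, IsRedOp T)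
    {W : Module.End K (G →₀ K)} (hker : ⨆ T ∈ F, LinearMap.ker T ≤ LinearMap.ker W)
    (hconf : reducedGenerators F ⊆ {g | W (single g 1) = single g 1}) (v : G →₀ K) :
    ∃! u, u ∈ supported K K (reducedGenerators F) ∧ ∃ R ∈ Submonoid.closure F, R v = u := by
  obtain ⟨R, hR, hRv⟩ := exists_mem_closure_apply_mem_supported hF v
  refine ⟨R v, ⟨hRv, R, hR, rfl⟩, ?_⟩
  rintro _ ⟨hR'v, R', hR', rfl⟩
  have hidem : ∀ T ∈ F, IsIdempotentElem T := fun T hT => (hF T hT).isIdempotentElem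
  have hdiff : R' v - R v ∈ LinearMap.ker W := hker <| by
    simpa using sub_mem (Module.End.sub_apply_mem_iSup_ker hidem hR v)
      (Module.End.sub_apply_mem_iSup_ker hidem hR' v)
  have hfix : W (R' v - R v) = R' v - R v :=
    apply_eq_self_of_mem_supported hconf (sub_mem hR'v hRv)
  rw [← sub_eq_zero, ← hfix]
  exact hdiff

theorem confluent_of_existsUnique_normalForm (hF : ∀ T ∈ F, IsRedOp T)
    {W : Module.End K (G →₀ K)} (hW : IsRedOp W)
    (hker : LinearMap.ker W ≤ ⨆ T ∈ F, LinearMap.ker T)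
    (hS : ∀ v, ∃! u, u ∈ supported K K (reducedGenerators F) ∧
      ∃ R ∈ Submonoid.closure F, R v = u) :
    reducedGenerators F ⊆ {g | W (single g 1) = single g 1} := by
  intro g hg
  by_contra hWg
  have hx : single g 1 - W (single g 1) ∈ LinearMap.ker W := by
    rw [LinearMap.mem_ker, map_sub, sub_eq_zero]
    exact (LinearMap.congr_fun hW.1 _).symm
  obtain ⟨R, hR, hRx⟩ := Module.End.exists_mem_closure_apply_eq_zero hS (hker hx)
  rw [map_sub, sub_eq_zero, Module.End.apply_eq_self_of_mem_closure hg hR]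
    at hRx
  have hlow : R (W (single g 1)) ∈ supported K K (Set.Iio g) :=
    Module.End.le_comap_of_mem_closure
      (fun T hT => (hF T hT).supported_le_comap (isLowerSet_Iio g)) hR
      (hW.apply_single_mem_supported_Iio hWg)
  rw [← hRx] at hlow
  exact lt_irrefl g (hlow (by simp))

end NormalForm

/-- `W` stands for `∧F`, and the left-hand side is the confluence of `F`. -/
theorem confluent_iff_unique_normal_form {K G : Type*} [Field K] [LinearOrder G]
    [WellFoundedLT G] (F : Set (Module.End K (G →₀ K)))
    (hF : ∀ T ∈ F, IsRedOp T) (W : Module.End K (G →₀ K)) (hW : IsRedOp W)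
    (hker : LinearMap.ker W = ⨆ T ∈ F, LinearMap.ker T) :
    ({g : G | ∀ T ∈ F, T (Finsupp.single g 1) = Finsupp.single g 1} ⊆
        {g : G | W (Finsupp.single g 1) = Finsupp.single g 1}) ↔
      ∀ v : G →₀ K, ∃! u : G →₀ K,
        u ∈ Submodule.span K
          ((fun g => Finsupp.single g (1 : K)) ''
            {g : G | ∀ T ∈ F, T (Finsupp.single g 1) = Finsupp.single g 1}) ∧
        ∃ R ∈ Submonoid.closure F, R v = u := by
  change reducedGenerators F ⊆ _ ↔ ∀ v, ∃! u, u ∈ span K (_ '' reducedGenerators F) ∧ _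
  rw [← supported_eq_span_single]
  exact ⟨fun hconf => existsUnique_normalForm_of_confluent hF hker.ge hconf,
    confluent_of_existsUnique_normalForm hF hW hker.le⟩
end
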